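/- For every integer N ≥ 1 and every f ∈ NN(N), there exist an integer K with 0 ≤ K ≤ N, coefficients c_1,…,c_K ∈ ℝ, a vector w ∈ ℝ^{d+1}, and directions v_1,…,v_K ∈ S_0 satisfying v_i ≠ v_k and v_i ≠ -v_k for all 1 ≤ i ≠ k ≤ K, such that f(x) = Σ_{k=1}^K c_k σ((xᵀ,1)v_k) + (xᵀ,1)w for all x ∈ B^d. -/

import Mathlib

/-!
Induct on the width, adding one neuron `β σ((xᵀ,1)u)` at a time. By positive homogeneity of `σ`
we may take `‖u‖ = 1`. On the unit ball, Cauchy–Schwarz bounds the part `xᵀ(u_1,…,u_d)` of the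
inner product by `√(1 - u_{d+1}²)`, which is at most `|u_{d+1}|` off `S_0`; so for `u ∈ S_-` the
neuron vanishes and for `u ∈ S_+` it is affine and joins the linear term. For `u ∈ S_0` it either
repeats a direction already used (add the coefficients), is antipodal to one (use
`σ(-t) = σ(t) - t`), or is new, and only in the last case does the number of directions grow.
-/

open MeasureTheory Real

noncomputable section

/-- Euclidean space ℝ^d. -/
abbrev E (d : ℕ) := EuclideanSpace ℝ (Fin d)

/-- The ReLU function σ(t) = max{t, 0}. -/
def relu (t : ℝ) : ℝ := max t 0

/-- The quantity (xᵀ,1)v : the inner product of (x,1) ∈ ℝ^{d+1} with v ∈ ℝ^{d+1}. -/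
def aff {d : ℕ} (x : E d) (v : E (d + 1)) : ℝ :=
  (∑ i : Fin d, x i * v i.castSucc) + v (Fin.last d)

/-- Parameters θ = (a_1, w_1, …, a_N, w_N) of a shallow ReLU network of width N. -/
abbrev Params (d N : ℕ) := (Fin N → ℝ) × (Fin N → E (d + 1))

/-- The network function f_θ(x) = Σ_i a_i σ((xᵀ,1) w_i). -/
def networkFn {d N : ℕ} (θ : Params d N) (x : E d) : ℝ :=
  ∑ i, θ.1 i * relu (aff x (θ.2 i))

/-- The path norm κ(θ) = Σ_i |a_i| ‖w_i‖₂. -/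
def pathNorm {d N : ℕ} (θ : Params d N) : ℝ :=
  ∑ i, |θ.1 i| * ‖θ.2 i‖

/-- The squared Euclidean norm ‖θ‖₂² of the parameter vector. -/
def paramNormSq {d N : ℕ} (θ : Params d N) : ℝ :=
  (∑ i, (θ.1 i) ^ 2) + ∑ i, ‖θ.2 i‖ ^ 2

/-- NN(N): functions on the unit ball B^d realized by a width-N shallow ReLU network. -/
def NNclass (d N : ℕ) : Set (E d → ℝ) :=
  {f | ∃ θ : Params d N, ∀ x : E d, ‖x‖ ≤ 1 → f x = networkFn θ x}

/-- NN(N, M): functions realized by a width-N network with path norm κ(θ) ≤ M. -/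
def NNclassM (d N : ℕ) (M : ℝ) : Set (E d → ℝ) :=
  {f | ∃ θ : Params d N, pathNorm θ ≤ M ∧ ∀ x : E d, ‖x‖ ≤ 1 → f x = networkFn θ x}

/-- κ(f) = inf{ Σ_j |c_j| : f(x) = Σ_j c_j σ((xᵀ,1)v_j) on B^d, v_j ∈ S^d }. -/
def kappaF {d : ℕ} (f : E d → ℝ) : ℝ :=
  sInf {s | ∃ (m : ℕ) (c : Fin m → ℝ) (v : Fin m → E (d + 1)),
    (∀ j, ‖v j‖ = 1) ∧ (∀ x : E d, ‖x‖ ≤ 1 → f x = ∑ j, c j * relu (aff x (v j))) ∧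
    s = ∑ j, |c j|}

/-- S_- = {v ∈ S^d : v_{d+1} ≤ -√2/2}. -/
def Sminus (d : ℕ) : Set (E (d + 1)) :=
  {v | ‖v‖ = 1 ∧ v (Fin.last d) ≤ -(Real.sqrt 2 / 2)}

/-- S_+ = -S_-. -/
def Splus (d : ℕ) : Set (E (d + 1)) := {v | -v ∈ Sminus d}

/-- S_0 = S^d \ (S_- ∪ S_+). -/
def Szero (d : ℕ) : Set (E (d + 1)) := {v | ‖v‖ = 1} \ (Sminus d ∪ Splus d)

/-- The variation class F_σ(M): functions f(x) = ∫_{S^d} σ((xᵀ,1)v) dμ(v) for a signed Radon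
measure μ on S^d with ‖μ‖ ≤ M (represented by its Jordan decomposition μ = μp - μn). -/
def Fsigma (d : ℕ) (M : ℝ) : Set (E d → ℝ) :=
  {f | ∃ μp μn : Measure (E (d + 1)), IsFiniteMeasure μp ∧ IsFiniteMeasure μn ∧
    μp {v | ‖v‖ = 1}ᶜ = 0 ∧ μn {v | ‖v‖ = 1}ᶜ = 0 ∧
    (μp Set.univ).toReal + (μn Set.univ).toReal ≤ M ∧
    ∀ x : E d, ‖x‖ ≤ 1 →
      f x = (∫ v, relu (aff x v) ∂μp) - ∫ v, relu (aff x v) ∂μn}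

/-- Empirical L²(μ_n) norm: ‖f‖_{L²(μ_n)} = ((1/n) Σ_i f(X_i)²)^{1/2}. -/
def empNorm {d n : ℕ} (X : Fin n → E d) (f : E d → ℝ) : ℝ :=
  Real.sqrt ((∑ i, (f (X i)) ^ 2) / n)

/-- Local complexity G_n(F; δ, ξ) = E[ sup { |(1/n) Σ_i ξ_i f(X_i)| : f ∈ F, ‖f‖_{L²(μ_n)} ≤ δ} ]. -/
def localComplexity {d n : ℕ} {Ω : Type*} [MeasurableSpace Ω] (P : Measure Ω)
    (F : Set (E d → ℝ)) (X : Fin n → E d) (δ : ℝ) (ξ : Fin n → Ω → ℝ) : ℝ :=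
  ∫ ω, sSup {r | ∃ f ∈ F, empNorm X f ≤ δ ∧ r = |(∑ i, ξ i ω * f (X i)) / n|} ∂P

/-- star(F) = {a f : f ∈ F, a ∈ [0,1]}. -/
def starHull {d : ℕ} (F : Set (E d → ℝ)) : Set (E d → ℝ) :=
  {g | ∃ f ∈ F, ∃ a : ℝ, 0 ≤ a ∧ a ≤ 1 ∧ g = fun x => a * f x}

/-- ∂F = {f₁ - f₂ : f₁, f₂ ∈ F}. -/
def diffClass {d : ℕ} (F : Set (E d → ℝ)) : Set (E d → ℝ) :=
  {g | ∃ f₁ ∈ F, ∃ f₂ ∈ F, g = f₁ - f₂}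

/-- Truncation operator T_b. -/
def truncate {d : ℕ} (b : ℝ) (f : E d → ℝ) : E d → ℝ := fun x => max (-b) (min b (f x))

/-- The Hölder ball H^α on B^d. -/
def HolderBall (d : ℕ) (α : ℝ) : Set (E d → ℝ) :=
  {h | ∃ (r : ℕ) (β : ℝ) (g : E d → ℝ), α = r + β ∧ 0 < β ∧ β ≤ 1 ∧
    (∀ x : E d, ‖x‖ ≤ 1 → g x = h x) ∧ ContDiff ℝ r g ∧
    (∀ k : ℕ, k ≤ r → ∀ x, ‖iteratedFDeriv ℝ k g x‖ ≤ 1) ∧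
    (∀ x y : E d, ‖iteratedFDeriv ℝ r g x - iteratedFDeriv ℝ r g y‖ ≤ ‖x - y‖ ^ β)}

lemma relu_neg (t : ℝ) : relu (-t) = relu t - t := by
  rw [relu, relu, ← max_sub_sub_right, sub_self, zero_sub, max_comm]

lemma relu_mul_of_nonneg {a : ℝ} (ha : 0 ≤ a) (t : ℝ) : relu (a * t) = a * relu t := by
  rw [relu, relu, mul_max_of_nonneg _ _ ha, mul_zero]

section Aff
variable {d : ℕ} (x : E d)

@[simp] lemma aff_zero : aff x 0 = 0 := by simp [aff]

lemma aff_add (v w : E (d + 1)) : aff x (v + w) = aff x v + aff x w := by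
  simp only [aff, PiLp.add_apply, mul_add, Finset.sum_add_distrib]; ring

lemma aff_smul (a : ℝ) (v : E (d + 1)) : aff x (a • v) = a * aff x v := by
  simp only [aff, PiLp.smul_apply, smul_eq_mul, mul_add, Finset.mul_sum, mul_left_comm]

lemma aff_neg (v : E (d + 1)) : aff x (-v) = -aff x v := by
  simpa using aff_smul x (-1) v

lemma aff_sub (v w : E (d + 1)) : aff x (v - w) = aff x v - aff x w := by
  rw [sub_eq_add_neg, aff_add, aff_neg, sub_eq_add_neg]

lemma relu_aff_eq_norm_mul (v : E (d + 1)) :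
    relu (aff x v) = ‖v‖ * relu (aff x (‖v‖⁻¹ • v)) := by
  rcases eq_or_ne v 0 with rfl | hv
  · simp [relu]
  · rw [← relu_mul_of_nonneg (norm_nonneg v), aff_smul,
      mul_inv_cancel_left₀ (norm_ne_zero_iff.2 hv)]

end Aff

lemma Fin.pairwise_snoc {α : Type*} {n : ℕ} {r : α → α → Prop} (hr : ∀ a b, r a b → r b a)
    {v : Fin n → α} {a : α} (hv : Pairwise fun i k => r (v i) (v k)) (ha : ∀ i, r (v i) a) :
    Pairwise fun i k =>
      r (Fin.snoc (α := fun _ => α) v a i) (Fin.snoc (α := fun _ => α) v a k) := by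
  intro i k hik
  induction i using Fin.lastCases with
  | last => induction k using Fin.lastCases with
    | last => exact absurd rfl hik
    | cast k => simpa using hr _ _ (ha k)
  | cast i => induction k using Fin.lastCases with
    | last => simpa using ha i
    | cast k => simpa using hv fun h => hik (congrArg _ h)

section Sphere
variable {d : ℕ} {x : E d} {v : E (d + 1)}

lemma sq_sum_mul_castSucc_le (hx : ‖x‖ ≤ 1) (hv : ‖v‖ = 1) :
    (∑ i, x i * v i.castSucc) ^ 2 ≤ 1 - v (Fin.last d) ^ 2 := by
  have hx2 : ∑ i, x i ^ 2 ≤ 1 := by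
    have := EuclideanSpace.norm_sq_eq x
    simp only [Real.norm_eq_abs, sq_abs] at this
    rw [← this]; nlinarith [norm_nonneg x]
  have hv2 : ∑ i : Fin d, v i.castSucc ^ 2 = 1 - v (Fin.last d) ^ 2 := by
    have := EuclideanSpace.norm_sq_eq v
    simp only [Real.norm_eq_abs, sq_abs, hv, Fin.sum_univ_castSucc] at this
    linarith
  calc (∑ i, x i * v i.castSucc) ^ 2 ≤ (∑ i, x i ^ 2) * ∑ i : Fin d, v i.castSucc ^ 2 :=
        Finset.sum_mul_sq_le_sq_mul_sq _ _ _
    _ ≤ 1 * ∑ i : Fin d, v i.castSucc ^ 2 := by gcongr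
    _ = 1 - v (Fin.last d) ^ 2 := by rw [one_mul, hv2]

lemma aff_nonpos_of_mem_Sminus (hv : v ∈ Sminus d) (hx : ‖x‖ ≤ 1) : aff x v ≤ 0 := by
  obtain ⟨hv1, hlast⟩ := hv
  have hs := sq_sum_mul_castSucc_le hx hv1
  have hsqrt := Real.sq_sqrt (show (0 : ℝ) ≤ 2 by norm_num)
  have hhalf : 1 / 2 ≤ v (Fin.last d) ^ 2 := by nlinarith [Real.sqrt_nonneg 2]
  unfold aff
  nlinarith [Real.sqrt_nonneg 2]

lemma relu_aff_of_mem_Splus (hv : v ∈ Splus d) (hx : ‖x‖ ≤ 1) : relu (aff x v) = aff x v := by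
  have := aff_nonpos_of_mem_Sminus hv hx
  rw [aff_neg] at this
  exact max_eq_left (by linarith)

end Sphere

def HasReducedRep (d N : ℕ) (g : E d → ℝ) : Prop :=
  ∃ (K : ℕ) (c : Fin K → ℝ) (v : Fin K → E (d + 1)) (w : E (d + 1)),
    K ≤ N ∧ (∀ k, v k ∈ Szero d) ∧ (Pairwise fun i k => v i ≠ v k ∧ v i ≠ -v k) ∧
    ∀ x : E d, ‖x‖ ≤ 1 → g x = (∑ k, c k * relu (aff x (v k))) + aff x w

lemma sum_add_single_mul {ι R : Type*} [Fintype ι] [DecidableEq ι] [NonUnitalNonAssocSemiring R]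
    (c g : ι → R) (k : ι) (β : R) :
    ∑ j, (c + Pi.single k β : ι → R) j * g j = (∑ j, c j * g j) + β * g k := by
  simp [add_mul, Finset.sum_add_distrib, Pi.single_apply]

namespace HasReducedRep
variable {d N : ℕ} {g : E d → ℝ}

lemma congr_ball {f : E d → ℝ} (h : HasReducedRep d N g) (hfg : ∀ x : E d, ‖x‖ ≤ 1 → f x = g x) :
    HasReducedRep d N f := by
  obtain ⟨K, c, v, w, hK, hS, hD, hg⟩ := h
  exact ⟨K, c, v, w, hK, hS, hD, fun x hx => (hfg x hx).trans (hg x hx)⟩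

lemma mono {M : ℕ} (h : HasReducedRep d N g) (hNM : N ≤ M) : HasReducedRep d M g := by
  obtain ⟨K, c, v, w, hK, hS, hD, hg⟩ := h
  exact ⟨K, c, v, w, hK.trans hNM, hS, hD, hg⟩

lemma add_aff (h : HasReducedRep d N g) (u : E (d + 1)) :
    HasReducedRep d N fun x => g x + aff x u := by
  obtain ⟨K, c, v, w, hK, hS, hD, hg⟩ := h
  refine ⟨K, c, v, w + u, hK, hS, hD, fun x hx => ?_⟩
  dsimp only
  rw [hg x hx, aff_add, add_assoc]

lemma add_relu_of_mem_Szero (h : HasReducedRep d N g) {u : E (d + 1)} (hu : u ∈ Szero d)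
    (β : ℝ) : HasReducedRep d (N + 1) fun x => g x + β * relu (aff x u) := by
  obtain ⟨K, c, v, w, hK, hS, hD, hg⟩ := h
  by_cases hpos : ∃ k, v k = u
  · obtain ⟨k, rfl⟩ := hpos
    refine ⟨K, c + Pi.single k β, v, w, hK.trans N.le_succ, hS, hD, fun x hx => ?_⟩
    dsimp only
    rw [hg x hx, sum_add_single_mul]
    ring
  by_cases hneg : ∃ k, v k = -u
  · obtain ⟨k, hk⟩ := hneg
    refine ⟨K, c + Pi.single k β, v, w - β • v k, hK.trans N.le_succ, hS, hD, fun x hx => ?_⟩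
    dsimp only
    rw [hg x hx, sum_add_single_mul, neg_eq_iff_eq_neg.1 hk.symm, aff_neg, relu_neg, aff_sub,
      aff_smul]
    ring
  simp only [not_exists] at hpos hneg
  refine ⟨K + 1, Fin.snoc c β, Fin.snoc v u, w, Nat.succ_le_succ hK,
    Fin.lastCases (by simpa using hu) (by simpa using hS), ?_, fun x hx => ?_⟩
  · exact Fin.pairwise_snoc (r := fun p q => p ≠ q ∧ p ≠ -q)
      (fun p q hpq => ⟨hpq.1.symm, fun h => hpq.2 (by rw [h, neg_neg])⟩) hD
      fun k => ⟨hpos k, hneg k⟩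
  · dsimp only
    rw [hg x hx, Fin.sum_univ_castSucc]
    simp only [Fin.snoc_castSucc, Fin.snoc_last]
    ring

lemma add_relu_of_norm_eq_one (h : HasReducedRep d N g) {u : E (d + 1)} (hu : ‖u‖ = 1)
    (β : ℝ) : HasReducedRep d (N + 1) fun x => g x + β * relu (aff x u) := by
  by_cases hm : u ∈ Sminus d
  · refine (h.mono N.le_succ).congr_ball fun x hx => ?_
    rw [relu, max_eq_right (aff_nonpos_of_mem_Sminus hm hx), mul_zero, add_zero]
  by_cases hp : u ∈ Splus d
  · refine ((h.add_aff (β • u)).mono N.le_succ).congr_ball fun x hx => ?_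
    rw [relu_aff_of_mem_Splus hp hx, aff_smul]
  exact h.add_relu_of_mem_Szero ⟨hu, by rintro (h | h) <;> contradiction⟩ β

lemma add_relu (h : HasReducedRep d N g) (β : ℝ) (u : E (d + 1)) :
    HasReducedRep d (N + 1) fun x => g x + β * relu (aff x u) := by
  rcases eq_or_ne u 0 with rfl | hu
  · exact (h.mono N.le_succ).congr_ball fun x _ => by simp [relu]
  have hnorm : ‖‖u‖⁻¹ • u‖ = 1 := by
    rw [norm_smul, norm_inv, norm_norm, inv_mul_cancel₀ (norm_ne_zero_iff.2 hu)]
  refine (h.add_relu_of_norm_eq_one hnorm (β * ‖u‖)).congr_ball fun x _ => ?_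
  rw [relu_aff_eq_norm_mul x u]
  ring

end HasReducedRep

lemma hasReducedRep_sum_relu {d N : ℕ} (b : Fin N → ℝ) (u : Fin N → E (d + 1)) :
    HasReducedRep d N fun x => ∑ i, b i * relu (aff x (u i)) := by
  induction N with
  | zero => exact ⟨0, Fin.elim0, Fin.elim0, 0, le_rfl, fun k => k.elim0, fun i => i.elim0, by simp⟩
  | succ N ih =>
    simp only [Fin.sum_univ_castSucc]
    exact (ih _ _).add_relu _ _

theorem statement1_general (d N : ℕ) (f : E d → ℝ)
    (hf : f ∈ NNclass d N) :
    ∃ (K : ℕ) (c : Fin K → ℝ) (v : Fin K → E (d + 1)) (w : E (d + 1)),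
      K ≤ N ∧ (∀ k, v k ∈ Szero d) ∧
      (∀ i k, i ≠ k → v i ≠ v k ∧ v i ≠ -v k) ∧
      ∀ x : E d, ‖x‖ ≤ 1 → f x = (∑ k, c k * relu (aff x (v k))) + aff x w := by
  obtain ⟨θ, hθ⟩ := hf
  exact (hasReducedRep_sum_relu θ.1 θ.2).congr_ball hθ

/-- every f ∈ NN(N) has a reduced representation
    f(x) = Σ_{k=1}^K c_k σ((xᵀ,1)v_k) + (xᵀ,1)w with K ≤ N, v_k ∈ S_0 pairwise non-(anti)parallel. -/
theorem statement1 (d N : ℕ) (hd : 1 ≤ d) (hN : 1 ≤ N) (f : E d → ℝ)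
    (hf : f ∈ NNclass d N) :
    ∃ (K : ℕ) (c : Fin K → ℝ) (v : Fin K → E (d + 1)) (w : E (d + 1)),
      K ≤ N ∧ (∀ k, v k ∈ Szero d) ∧
      (∀ i k, i ≠ k → v i ≠ v k ∧ v i ≠ -v k) ∧
      ∀ x : E d, ‖x‖ ≤ 1 → f x = (∑ k, c k * relu (aff x (v k))) + aff x w :=
  statement1_general d N f hf
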